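/- Let A be a unital C*-algebra, B a C*-algebra, S a set, and k : S × S → B(A,B) a positive-definite kernel. Suppose (E, ζ) and (E', ζ') are two minimal pairs representing k: E and E' are C*-correspondences from A to B on which the unit of A acts as the identity, ζ : S → E and ζ' : S → E' satisfy k(s,t)(a) = ⟨ζ(s), a·ζ(t)⟩ = ⟨ζ'(s), a·ζ'(t)⟩ for all s, t ∈ S, a ∈ A, and the closed linear spans of {a·ζ(s)·b : a ∈ A, s ∈ S, b ∈ B} and {a·ζ'(s)·b : a ∈ A, s ∈ S, b ∈ B} equal E and E' respectively. Then there is a unique map U : E → E' which is bijective, ℂ-linear, commutes with the left A-actions and the right B-actions, preserves the B-valued inner products (⟨Uξ, Uη⟩ = ⟨ξ, η⟩ for all ξ, η ∈ E), and satisfies U ζ(s) = ζ'(s) for all s ∈ S. -/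

import Mathlib

/-!
By the representing property, `⟨a·ζ(s)·b, a'·ζ(t)·b'⟩ = b* k(s,t)(a* a') b'` is determined by
`k` alone, so sending a linear combination of the vectors `a·ζ(s)·b` to the same combination of
the vectors `a·ζ'(s)·b` is well defined and isometric. By minimality both families span densely,
so this map extends to a surjective linear isometry `U : E → E'`. Every other property of `U`,
and its uniqueness, follows because a vector of `E'` is determined by its inner products with
the vectors `a·ζ'(s)·b`: these inner products are continuous by the Cauchy–Schwarz inequality.
-/

namespace Stmt4

universe u v

-- Positivity, in `C` and in `Matₙ(B)`, is encoded by the C*-characterisation `x = c* c`.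
structure Correspondence (A : Type u) (C : Type v) [NonUnitalRing A] [StarRing A]
    [NonUnitalRing C] [StarRing C] [Module ℂ C] (nC : C → ℝ) where
  carrier : Type (max u v)
  [instNormed : NormedAddCommGroup carrier]
  [instModule : NormedSpace ℂ carrier]
  [instComplete : CompleteSpace carrier]
  lsmul : A → carrier → carrier
  rsmul : carrier → C → carrier
  ip : carrier → carrier → C
  ip_add_right : ∀ ξ ζ η, ip ξ (ζ + η) = ip ξ ζ + ip ξ η
  ip_smul_right : ∀ (c : ℂ) ξ ζ, ip ξ (c • ζ) = c • ip ξ ζ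
  ip_rsmul_right : ∀ ξ ζ b, ip ξ (rsmul ζ b) = ip ξ ζ * b
  ip_star : ∀ ξ ζ, star (ip ξ ζ) = ip ζ ξ
  ip_nonneg : ∀ ξ, ∃ c, ip ξ ξ = star c * c
  ip_definite : ∀ ξ, ip ξ ξ = 0 → ξ = 0
  norm_eq : ∀ ξ, ‖ξ‖ = Real.sqrt (nC (ip ξ ξ))
  rsmul_add_left : ∀ ξ ζ b, rsmul (ξ + ζ) b = rsmul ξ b + rsmul ζ b
  rsmul_add_right : ∀ ξ b b', rsmul ξ (b + b') = rsmul ξ b + rsmul ξ b'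
  rsmul_rsmul : ∀ ξ b b', rsmul (rsmul ξ b) b' = rsmul ξ (b * b')
  lsmul_add : ∀ a ξ ζ, lsmul a (ξ + ζ) = lsmul a ξ + lsmul a ζ
  lsmul_smul : ∀ a (c : ℂ) ξ, lsmul a (c • ξ) = c • lsmul a ξ
  lsmul_add_left : ∀ a a' ξ, lsmul (a + a') ξ = lsmul a ξ + lsmul a' ξ
  lsmul_lsmul : ∀ a a' ξ, lsmul (a * a') ξ = lsmul a (lsmul a' ξ)
  lsmul_bounded : ∀ a, ∃ M : ℝ, ∀ ξ, ‖lsmul a ξ‖ ≤ M * ‖ξ‖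
  ip_lsmul : ∀ a ξ ζ, ip (lsmul a ξ) ζ = ip ξ (lsmul (star a) ζ)
  lsmul_rsmul : ∀ a ξ b, lsmul a (rsmul ξ b) = rsmul (lsmul a ξ) b
  nondegenerate : closure (↑(Submodule.span ℂ {y : carrier | ∃ a ξ, lsmul a ξ = y}) : Set carrier)
    = Set.univ

attribute [instance] Correspondence.instNormed Correspondence.instModule
  Correspondence.instComplete

variable {A : Type u} [CStarAlgebra A] {B : Type v} [NonUnitalCStarAlgebra B] {S : Type*}

def PosDefKernel (k : S × S → A →L[ℂ] B) : Prop :=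
  ∀ (n : ℕ) (s : Fin n → S) (a : Fin n → A),
    ∃ N : Matrix (Fin n) (Fin n) B,
      (Matrix.of fun i j => k (s i, s j) (star (a i) * a j)) = star N * N

def Represents (k : S × S → A →L[ℂ] B) (E : Correspondence A B fun b => ‖b‖)
    (ζ : S → E.carrier) : Prop :=
  (∀ ξ : E.carrier, E.lsmul 1 ξ = ξ) ∧
    ∀ (s t : S) (a : A), k (s, t) a = E.ip (ζ s) (E.lsmul a (ζ t))

def Minimal (E : Correspondence A B fun b => ‖b‖) (ζ : S → E.carrier) : Prop :=
  closure (↑(Submodule.span ℂ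
      {y : E.carrier | ∃ (a : A) (s : S) (b : B), E.rsmul (E.lsmul a (ζ s)) b = y})
    : Set E.carrier) = Set.univ

namespace Correspondence

variable {A : Type u} [NonUnitalRing A] [StarRing A] (E : Correspondence A B fun b => ‖b‖)

lemma ip_add_left (ξ ζ η : E.carrier) : E.ip (ξ + ζ) η = E.ip ξ η + E.ip ζ η := by
  rw [← E.ip_star, E.ip_add_right, star_add, E.ip_star, E.ip_star]

lemma ip_smul_left (c : ℂ) (ξ η : E.carrier) : E.ip (c • ξ) η = star c • E.ip ξ η := by
  rw [← E.ip_star, E.ip_smul_right, star_smul, E.ip_star]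

lemma ip_rsmul_left (ξ η : E.carrier) (b : B) : E.ip (E.rsmul ξ b) η = star b * E.ip ξ η := by
  rw [← E.ip_star, E.ip_rsmul_right, star_mul, E.ip_star]

def ipₛₗ : E.carrier →ₗ⋆[ℂ] E.carrier →ₗ[ℂ] B :=
  LinearMap.mk₂'ₛₗ (starRingEnd ℂ) (RingHom.id ℂ) E.ip E.ip_add_left E.ip_smul_left
    E.ip_add_right E.ip_smul_right

@[simp] lemma ipₛₗ_apply (ξ η : E.carrier) : E.ipₛₗ ξ η = E.ip ξ η := rfl

lemma norm_ip_le (ξ η : E.carrier) : ‖E.ip ξ η‖ ≤ ‖ξ‖ * ‖η‖ := by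
  -- In Mathlib's `CStarModule` the algebra acts on the left, with `⟪x, a • y⟫ = a * ⟪x, y⟫`:
  -- the right action of `B` is such an action of `Bᵐᵒᵖ`.
  let _ : PartialOrder Bᵐᵒᵖ := CStarAlgebra.spectralOrder _
  have _ : StarOrderedRing Bᵐᵒᵖ := CStarAlgebra.spectralOrderedRing _
  let _ : SMul Bᵐᵒᵖ E.carrier := ⟨fun b ξ => E.rsmul ξ b.unop⟩
  let _ : CStarModule Bᵐᵒᵖ E.carrier :=
    { inner ξ η := MulOpposite.op (E.ip ξ η)
      inner_add_right := by simp [E.ip_add_right]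
      inner_self_nonneg {ξ} := by
        obtain ⟨c, hc⟩ := E.ip_nonneg ξ
        rw [hc, MulOpposite.op_mul, MulOpposite.op_star]
        exact mul_star_self_nonneg _
      inner_self {ξ} := MulOpposite.op_eq_zero_iff _ |>.trans
        ⟨E.ip_definite ξ, by rintro rfl; exact (E.ipₛₗ 0).map_zero⟩
      inner_op_smul_right {b ξ η} := congrArg MulOpposite.op (E.ip_rsmul_right ξ η b.unop)
      inner_smul_right_complex {c ξ η} := congrArg MulOpposite.op (E.ip_smul_right c ξ η)
      star_inner ξ η := congrArg MulOpposite.op (E.ip_star ξ η)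
      norm_eq_sqrt_norm_inner_self := E.norm_eq }
  exact CStarModule.norm_inner_le (A := Bᵐᵒᵖ) E.carrier

noncomputable def ipSL : E.carrier →L⋆[ℂ] E.carrier →L[ℂ] B :=
  E.ipₛₗ.mkContinuous₂ 1 fun ξ η => by simpa using E.norm_ip_le ξ η

lemma continuous_ip : Continuous fun p : E.carrier × E.carrier => E.ip p.1 p.2 :=
  (E.ipSL.continuous.comp continuous_fst).clm_apply continuous_snd

lemma ip_sub_left (ξ η ζ : E.carrier) : E.ip (ξ - η) ζ = E.ip ξ ζ - E.ip η ζ :=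
  LinearMap.congr_fun (map_sub E.ipₛₗ ξ η) ζ

lemma ip_linearCombination {ι : Type*} (v : ι → E.carrier) (x y : ι →₀ ℂ) :
    E.ip (Finsupp.linearCombination ℂ v x) (Finsupp.linearCombination ℂ v y) =
      x.sum fun i c => y.sum fun j d => (star c * d) • E.ip (v i) (v j) := by
  simp only [Finsupp.linearCombination_apply, Finsupp.sum, ← ipₛₗ_apply, map_sum, map_smulₛₗ,
    LinearMap.sum_apply, LinearMap.smul_apply, Finset.smul_sum, mul_smul, starRingEnd_apply]
  rw [Finset.sum_comm]
  simp only [RingHom.id_apply, smul_comm (y _) (star _)]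

def generator (ζ : S → E.carrier) (p : A × S × B) : E.carrier :=
  E.rsmul (E.lsmul p.1 (ζ p.2.1)) p.2.2

lemma lsmul_generator (ζ : S → E.carrier) (a : A) (p : A × S × B) :
    E.lsmul a (E.generator ζ p) = E.generator ζ (a * p.1, p.2) := by
  rw [generator, generator, E.lsmul_rsmul, E.lsmul_lsmul]

end Correspondence

open Correspondence

section MinimalUnitary

variable {E E' : Correspondence A B fun b => ‖b‖} {ζ : S → E.carrier} {ζ' : S → E'.carrier}
  {k : S × S → A →L[ℂ] B}

lemma Represents.ip_generator_right (hE : Represents k E ζ) (s : S) (p : A × S × B) :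
    E.ip (ζ s) (E.generator ζ p) = k (s, p.2.1) p.1 * p.2.2 := by
  rw [generator, E.ip_rsmul_right, hE.2]

lemma Represents.ip_generator (hE : Represents k E ζ) (p q : A × S × B) :
    E.ip (E.generator ζ p) (E.generator ζ q) =
      star p.2.2 * (k (p.2.1, q.2.1) (star p.1 * q.1) * q.2.2) := by
  rw [generator, E.ip_rsmul_left, E.ip_lsmul, lsmul_generator, hE.ip_generator_right]

lemma Represents.ip_linearCombination_generator (hE : Represents k E ζ)
    (hE' : Represents k E' ζ') (x y : A × S × B →₀ ℂ) :
    E'.ip (Finsupp.linearCombination ℂ (E'.generator ζ') x)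
        (Finsupp.linearCombination ℂ (E'.generator ζ') y) =
      E.ip (Finsupp.linearCombination ℂ (E.generator ζ) x)
        (Finsupp.linearCombination ℂ (E.generator ζ) y) := by
  simp only [ip_linearCombination, hE.ip_generator, hE'.ip_generator]

lemma Minimal.dense_span_range_generator (hmin : Minimal E ζ) :
    Dense (Submodule.span ℂ (Set.range (E.generator ζ)) : Set E.carrier) := by
  have : Set.range (E.generator ζ) = {y | ∃ a s b, E.rsmul (E.lsmul a (ζ s)) b = y} := by
    ext y
    simp [generator]
  rw [this, dense_iff_closure_eq]
  exact hmin

lemma Minimal.denseRange_linearCombination_generator (hmin : Minimal E ζ) :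
    DenseRange (Finsupp.linearCombination ℂ (E.generator ζ)) := by
  rw [DenseRange, ← LinearMap.coe_range, Finsupp.range_linearCombination]
  exact hmin.dense_span_range_generator

lemma Minimal.ext_of_ip_generator (hmin : Minimal E ζ) {ξ η : E.carrier}
    (h : ∀ p, E.ip ξ (E.generator ζ p) = E.ip η (E.generator ζ p)) : ξ = η := by
  have hSL : E.ipSL ξ = E.ipSL η :=
    ContinuousLinearMap.ext_on hmin.dense_span_range_generator (by rintro _ ⟨p, rfl⟩; exact h p)
  refine sub_eq_zero.mp (E.ip_definite _ ?_)
  rw [E.ip_sub_left, sub_eq_zero]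
  exact congr($hSL (ξ - η))

lemma Represents.norm_linearCombination_generator (hE : Represents k E ζ)
    (hE' : Represents k E' ζ') (x : A × S × B →₀ ℂ) :
    ‖Finsupp.linearCombination ℂ (E'.generator ζ') x‖ =
      ‖Finsupp.linearCombination ℂ (E.generator ζ) x‖ := by
  rw [E.norm_eq, E'.norm_eq, hE.ip_linearCombination_generator hE']

variable (hE : Represents k E ζ) (hE' : Represents k E' ζ') (hmin : Minimal E ζ)
  (hmin' : Minimal E' ζ')

noncomputable def minimalUnitary : E.carrier ≃ₗᵢ[ℂ] E'.carrier :=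
  (LinearEquiv.refl ℂ _).extendOfIsometry _ _ hmin.denseRange_linearCombination_generator
    hmin'.denseRange_linearCombination_generator (hE.norm_linearCombination_generator hE')

lemma minimalUnitary_linearCombination (x : A × S × B →₀ ℂ) :
    minimalUnitary hE hE' hmin hmin' (Finsupp.linearCombination ℂ (E.generator ζ) x) =
      Finsupp.linearCombination ℂ (E'.generator ζ') x :=
  LinearEquiv.extendOfIsometry_eq _ _ _ _ _ _ x

lemma minimalUnitary_generator (p : A × S × B) :
    minimalUnitary hE hE' hmin hmin' (E.generator ζ p) = E'.generator ζ' p := by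
  simpa using minimalUnitary_linearCombination hE hE' hmin hmin' (Finsupp.single p 1)

lemma ip_minimalUnitary (ξ η : E.carrier) :
    E'.ip (minimalUnitary hE hE' hmin hmin' ξ) (minimalUnitary hE hE' hmin hmin' η) =
      E.ip ξ η := by
  set U := minimalUnitary hE hE' hmin hmin'
  have hd := hmin.denseRange_linearCombination_generator
  refine congrFun ((hd.prodMap hd).equalizer (g := fun p => E'.ip (U p.1) (U p.2)) ?_
    E.continuous_ip ?_) (ξ, η)
  · exact E'.continuous_ip.comp (U.continuous.prodMap U.continuous)
  · ext x
    simp [U, minimalUnitary_linearCombination, hE.ip_linearCombination_generator hE']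

lemma ip_minimalUnitary_generator (ξ : E.carrier) (p : A × S × B) :
    E'.ip (minimalUnitary hE hE' hmin hmin' ξ) (E'.generator ζ' p) =
      E.ip ξ (E.generator ζ p) := by
  rw [← minimalUnitary_generator hE hE' hmin hmin', ip_minimalUnitary]

lemma minimalUnitary_lsmul (a : A) (ξ : E.carrier) :
    minimalUnitary hE hE' hmin hmin' (E.lsmul a ξ) =
      E'.lsmul a (minimalUnitary hE hE' hmin hmin' ξ) :=
  hmin'.ext_of_ip_generator fun p => by
    rw [E'.ip_lsmul, lsmul_generator, ip_minimalUnitary_generator, ip_minimalUnitary_generator,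
      E.ip_lsmul, lsmul_generator]

lemma minimalUnitary_rsmul (ξ : E.carrier) (b : B) :
    minimalUnitary hE hE' hmin hmin' (E.rsmul ξ b) =
      E'.rsmul (minimalUnitary hE hE' hmin hmin' ξ) b :=
  hmin'.ext_of_ip_generator fun p => by
    rw [E'.ip_rsmul_left, ip_minimalUnitary_generator, ip_minimalUnitary_generator,
      E.ip_rsmul_left]

lemma minimalUnitary_apply_ζ (s : S) : minimalUnitary hE hE' hmin hmin' (ζ s) = ζ' s :=
  hmin'.ext_of_ip_generator fun p => by
    rw [ip_minimalUnitary_generator, hE.ip_generator_right, hE'.ip_generator_right]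

lemma eq_minimalUnitary {V : E.carrier → E'.carrier}
    (hV : ∀ ξ η, E'.ip (V ξ) (V η) = E.ip ξ η)
    (hVgen : ∀ p, V (E.generator ζ p) = E'.generator ζ' p) :
    V = minimalUnitary hE hE' hmin hmin' :=
  funext fun ξ => hmin'.ext_of_ip_generator fun p => by
    rw [ip_minimalUnitary_generator, ← hVgen, hV]

end MinimalUnitary

theorem minimal_pair_unique (k : S × S → A →L[ℂ] B)
    (E E' : Correspondence A B fun b => ‖b‖) (ζ : S → E.carrier) (ζ' : S → E'.carrier)
    (hE : Represents k E ζ) (hE' : Represents k E' ζ')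
    (hmin : Minimal E ζ) (hmin' : Minimal E' ζ') :
    ∃! U : E.carrier → E'.carrier,
      Function.Bijective U ∧
        (∀ ξ η, U (ξ + η) = U ξ + U η) ∧
        (∀ (c : ℂ) ξ, U (c • ξ) = c • U ξ) ∧
        (∀ (a : A) ξ, U (E.lsmul a ξ) = E'.lsmul a (U ξ)) ∧
        (∀ ξ (b : B), U (E.rsmul ξ b) = E'.rsmul (U ξ) b) ∧
        (∀ ξ η, E'.ip (U ξ) (U η) = E.ip ξ η) ∧
        ∀ s : S, U (ζ s) = ζ' s := by
  set U := minimalUnitary hE hE' hmin hmin'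
  refine ⟨U, ⟨U.bijective, map_add U, map_smul U, minimalUnitary_lsmul hE hE' hmin hmin',
    minimalUnitary_rsmul hE hE' hmin hmin', ip_minimalUnitary hE hE' hmin hmin',
    minimalUnitary_apply_ζ hE hE' hmin hmin'⟩, ?_⟩
  rintro V ⟨-, -, -, hVl, hVr, hVip, hVζ⟩
  refine eq_minimalUnitary hE hE' hmin hmin' hVip fun p => ?_
  rw [generator, hVr, hVl, hVζ]
  rfl

end Stmt4
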